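/- arXiv:2112.02089 — 5 statements merged into one kernel-verified Lean document; each statement's English description precedes it below -/
import Mathlib

section
/- Let {α_k}_{k≥0} be a sequence of nonnegative real numbers satisfying α_{k+1} ≤ α_k − (2/3)·α_k^{3/2} for all k ≥ 0. Then for every k ≥ 0, α_{k+1} ≤ 1/(1 + k/3)². -/
/-!
Write `α_k = s²` with `s = √α_k`; the recursion reads `α_{k+1} ≤ g s` with `g s = s² - (2/3) s³`.
Since `g ≤ 1/3` on `[0, ∞)`, we get `α_1 ≤ 1/3 ≤ 1`. Since `g` is monotone on `[0, 1]`, a bound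
`α_k ≤ 1/t²` with `t ≥ 1` gives `α_{k+1} ≤ g (1/t) = 1/t² - 2/(3t³) ≤ 1/(t + 1/3)²`, so the
bound improves by `1/3` in `t` at each step.
-/

open Real

lemma rpow_three_halves_eq_sqrt_pow {x : ℝ} (hx : 0 ≤ x) : x ^ ((3 : ℝ) / 2) = √x ^ 3 := by
  rw [show (3 : ℝ) / 2 = 1 / 2 * (3 : ℕ) by norm_num, rpow_mul hx, ← sqrt_eq_rpow, rpow_natCast]

lemma sq_sub_two_thirds_mul_cube_le {s : ℝ} (hs : 0 ≤ s) : s ^ 2 - 2 / 3 * s ^ 3 ≤ 1 / 3 := by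
  -- `1/3 - s² + (2/3) s³ = (1/3) (s - 1)² (2s + 1)`
  nlinarith [mul_nonneg (sq_nonneg (s - 1)) hs]

lemma monotoneOn_sq_sub_two_thirds_mul_cube :
    MonotoneOn (fun s : ℝ => s ^ 2 - 2 / 3 * s ^ 3) (Set.Icc 0 1) := by
  rintro a ⟨ha0, ha1⟩ b ⟨hb0, hb1⟩ hab
  -- `g b - g a = (b - a) (a + b - (2/3)(a² + ab + b²))`,
  -- and `a² + ab + b² ≤ (3/2)(a + b)` on `[0, 1]`
  have hquad : a ^ 2 + a * b + b ^ 2 ≤ 3 / 2 * (a + b) := by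
    nlinarith [mul_le_mul ha1 hb1 hb0 zero_le_one, mul_le_of_le_one_left ha0 ha1,
      mul_le_of_le_one_left hb0 hb1]
  nlinarith [mul_nonneg (sub_nonneg.2 hab)
    (by linarith : 0 ≤ a + b - 2 / 3 * (a ^ 2 + a * b + b ^ 2))]

lemma inv_sq_sub_two_thirds_mul_inv_cube_le {t : ℝ} (ht : 0 < t) :
    (1 / t) ^ 2 - 2 / 3 * (1 / t) ^ 3 ≤ 1 / (t + 1 / 3) ^ 2 := by
  rw [div_pow, div_pow, one_pow, one_pow, ← sub_nonneg]
  have key : 1 / (t + 1 / 3) ^ 2 - (1 / t ^ 2 - 2 / 3 * (1 / t ^ 3)) =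
      (t + 2 / 9) / (3 * t ^ 3 * (t + 1 / 3) ^ 2) := by
    field_simp
    ring
  rw [key]
  positivity

lemma sub_two_thirds_mul_rpow_le_of_le_inv_sq {x t : ℝ} (hx : 0 ≤ x) (ht : 1 ≤ t)
    (hxt : x ≤ 1 / t ^ 2) : x - 2 / 3 * x ^ ((3 : ℝ) / 2) ≤ 1 / (t + 1 / 3) ^ 2 := by
  have ht0 : 0 < t := by linarith
  have hsqrt : √x ≤ 1 / t := by
    simpa [sqrt_inv, sqrt_sq ht0.le] using sqrt_le_sqrt hxt
  have hinv : 1 / t ≤ 1 := by rw [div_le_one ht0]; exact ht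
  calc x - 2 / 3 * x ^ ((3 : ℝ) / 2) = √x ^ 2 - 2 / 3 * √x ^ 3 := by
        rw [rpow_three_halves_eq_sqrt_pow hx, sq_sqrt hx]
    _ ≤ (1 / t) ^ 2 - 2 / 3 * (1 / t) ^ 3 :=
        monotoneOn_sq_sub_two_thirds_mul_cube ⟨sqrt_nonneg x, hsqrt.trans hinv⟩
          ⟨by positivity, hinv⟩ hsqrt
    _ ≤ 1 / (t + 1 / 3) ^ 2 := inv_sq_sub_two_thirds_mul_inv_cube_le ht0

lemma sub_two_thirds_mul_rpow_le {x : ℝ} (hx : 0 ≤ x) :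
    x - 2 / 3 * x ^ ((3 : ℝ) / 2) ≤ 1 / 3 := by
  simpa [rpow_three_halves_eq_sqrt_pow hx, sq_sqrt hx] using
    sq_sub_two_thirds_mul_cube_le (sqrt_nonneg x)

/-- If a nonnegative real sequence satisfies
`α_{k+1} ≤ α_k − (2/3) α_k^{3/2}` for all `k`, then `α_{k+1} ≤ 1/(1 + k/3)²`. -/
theorem stmt_7 (α : ℕ → ℝ) (hnonneg : ∀ k, 0 ≤ α k)
    (hrec : ∀ k, α (k + 1) ≤ α k - (2 / 3) * α k ^ ((3 : ℝ) / 2)) :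
    ∀ k : ℕ, α (k + 1) ≤ 1 / (1 + (k : ℝ) / 3) ^ 2 := by
  intro k
  induction k with
  | zero =>
    norm_num
    linarith [(hrec 0).trans (sub_two_thirds_mul_rpow_le (hnonneg 0))]
  | succ n ih =>
    have ht : (1 : ℝ) ≤ 1 + (n : ℝ) / 3 := by linarith [n.cast_nonneg (α := ℝ)]
    calc α (n + 1 + 1) ≤ 1 / (1 + (n : ℝ) / 3 + 1 / 3) ^ 2 :=
          (hrec (n + 1)).trans (sub_two_thirds_mul_rpow_le_of_le_inv_sq (hnonneg (n + 1)) ht ih)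
      _ = 1 / (1 + ((n + 1 : ℕ) : ℝ) / 3) ^ 2 := by push_cast; ring
end

section
/- Let f : ℝ^d → ℝ be twice differentiable and μ-strongly convex (∇²f(x) − μ·I positive semidefinite for all x, μ > 0), with second-order error bound ‖∇f(y) − ∇f(x) − ∇²f(x)(y − x)‖ ≤ H‖y − x‖² for all x, y ∈ ℝ^d, where H > 0. Let {x^k}_{k≥0} satisfy, for every k, (∇²f(x^k) + λ_k·I)(x^{k+1} − x^k) = −∇f(x^k) with λ_k = √(H‖∇f(x^k)‖). If for some index k₀ it holds that ‖∇f(x^{k₀})‖ ≤ μ²/(4H), then for every k ≥ k₀ we have ‖∇f(x^{k+1})‖ ≤ (2√H/μ)·‖∇f(x^k)‖^{3/2} and ‖∇f(x^k)‖ ≤ μ²/(4H). -/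
open RealInnerProductSpace

/-!
Write `g = ∇f(xᵏ)`, `g' = ∇f(xᵏ⁺¹)`, `Δ = xᵏ⁺¹ - xᵏ` and `λ = λₖ`. Pairing the step equation
with `Δ` and using strong convexity gives `(μ + λ)‖Δ‖ ≤ ‖g‖`; the step equation turns the
second-order error bound into `‖g' + λΔ‖ ≤ H‖Δ‖²`. Since `λ² = H‖g‖`, these combine to
`μ‖g'‖ ≤ (H‖Δ‖ + λ)(‖g‖ - λ‖Δ‖) ≤ λ‖g‖`. Below the threshold `‖g‖ ≤ μ²/(4H)` we have `λ ≤ μ/2`,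
so the gradient norm does not increase and the threshold is preserved.
-/

section RegularizedNewtonStep

variable {E : Type*} [NormedAddCommGroup E] [InnerProductSpace ℝ E]

theorem regularizedStep_mul_norm_le {μ c : ℝ} {A : E →L[ℝ] E}
    (hA : ∀ v, 0 ≤ ⟪A v - μ • v, v⟫) {Δ g : E} (hstep : A Δ + c • Δ = -g) :
    (μ + c) * ‖Δ‖ ≤ ‖g‖ := by
  have hpair : (μ + c) * ‖Δ‖ ^ 2 ≤ ⟪-g, Δ⟫ := by
    have h := hA Δ
    rw [← hstep, inner_add_left]
    simp only [inner_sub_left, real_inner_smul_left, real_inner_self_eq_norm_sq] at h ⊢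
    linarith
  have hcs : ⟪-g, Δ⟫ ≤ ‖g‖ * ‖Δ‖ := by simpa using real_inner_le_norm (-g) Δ
  rcases (norm_nonneg Δ).eq_or_lt with hΔ | hΔ
  · rw [← hΔ, mul_zero]
    exact norm_nonneg g
  · exact le_of_mul_le_mul_right (by nlinarith) hΔ

theorem regularizedStep_norm_le {c H : ℝ} {A : E →L[ℝ] E} {Δ g g' : E}
    (hstep : A Δ + c • Δ = -g) (herr : ‖g' - g - A Δ‖ ≤ H * ‖Δ‖ ^ 2) :
    ‖g'‖ ≤ H * ‖Δ‖ ^ 2 + |c| * ‖Δ‖ := by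
  have hres : g' - g - A Δ = g' + c • Δ := by
    rw [eq_sub_of_add_eq hstep]
    abel
  calc ‖g'‖ = ‖(g' + c • Δ) - c • Δ‖ := by rw [add_sub_cancel_right]
    _ ≤ ‖g' + c • Δ‖ + ‖c • Δ‖ := norm_sub_le _ _
    _ ≤ H * ‖Δ‖ ^ 2 + |c| * ‖Δ‖ := by
        rw [norm_smul, Real.norm_eq_abs, ← hres]
        exact add_le_add_left herr _

theorem regularizedStep_mul_norm_gradient_le {μ c H : ℝ} (hμ : 0 ≤ μ) (hH : 0 ≤ H)
    (hc : 0 ≤ c) {A : E →L[ℝ] E} (hA : ∀ v, 0 ≤ ⟪A v - μ • v, v⟫) {Δ g g' : E}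
    (hc_sq : c ^ 2 = H * ‖g‖) (hstep : A Δ + c • Δ = -g)
    (herr : ‖g' - g - A Δ‖ ≤ H * ‖Δ‖ ^ 2) :
    μ * ‖g'‖ ≤ c * ‖g‖ := by
  have hΔ := regularizedStep_mul_norm_le hA hstep
  have hg' := regularizedStep_norm_le hstep herr
  rw [abs_of_nonneg hc] at hg'
  have ht := norm_nonneg Δ
  calc μ * ‖g'‖ ≤ (H * ‖Δ‖ + c) * (μ * ‖Δ‖) := by nlinarith
    _ ≤ (H * ‖Δ‖ + c) * (‖g‖ - c * ‖Δ‖) := by gcongr; linarith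
    _ = c * ‖g‖ - H * c * ‖Δ‖ ^ 2 := by linear_combination (-‖Δ‖) * hc_sq
    _ ≤ c * ‖g‖ := by nlinarith [mul_nonneg (mul_nonneg hH hc) (sq_nonneg ‖Δ‖)]

end RegularizedNewtonStep

theorem Real.sqrt_mul_le_half_of_le_div {μ H t : ℝ} (hμ : 0 ≤ μ) (hH : 0 < H)
    (ht : t ≤ μ ^ 2 / (4 * H)) : √(H * t) ≤ μ / 2 := by
  rw [Real.sqrt_le_left (by positivity)]
  calc H * t ≤ H * (μ ^ 2 / (4 * H)) := by gcongr
    _ = (μ / 2) ^ 2 := by field_simp; ring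

theorem Real.sqrt_mul_self_eq_rpow {t : ℝ} (ht : 0 ≤ t) : √t * t = t ^ ((3 : ℝ) / 2) := by
  rw [Real.sqrt_eq_rpow, show (3 : ℝ) / 2 = 1 / 2 + 1 by norm_num,
    Real.rpow_add' ht (by norm_num), Real.rpow_one]

theorem stmt_11_general {d : ℕ} (f : EuclideanSpace ℝ (Fin d) → ℝ)
    (μ : ℝ) (hμ : 0 < μ)
    (hsc : ∀ x v : EuclideanSpace ℝ (Fin d),
      0 ≤ ⟪fderiv ℝ (gradient f) x v - μ • v, v⟫)
    (H : ℝ) (hH : 0 < H)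
    (herr : ∀ x y : EuclideanSpace ℝ (Fin d),
      ‖gradient f y - gradient f x - fderiv ℝ (gradient f) x (y - x)‖ ≤ H * ‖y - x‖ ^ 2)
    (x : ℕ → EuclideanSpace ℝ (Fin d))
    (lam : ℕ → ℝ)
    (hlam : ∀ k, lam k = Real.sqrt (H * ‖gradient f (x k)‖))
    (hstep : ∀ k, fderiv ℝ (gradient f) (x k) (x (k + 1) - x k)
      + lam k • (x (k + 1) - x k) = -gradient f (x k))
    (k₀ : ℕ) (hk₀ : ‖gradient f (x k₀)‖ ≤ μ ^ 2 / (4 * H)) :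
    ∀ k : ℕ, k₀ ≤ k →
      ‖gradient f (x (k + 1))‖ ≤ (2 * Real.sqrt H / μ) * ‖gradient f (x k)‖ ^ ((3 : ℝ) / 2)
        ∧ ‖gradient f (x k)‖ ≤ μ ^ 2 / (4 * H) := by
  have hone : ∀ k, μ * ‖gradient f (x (k + 1))‖ ≤ lam k * ‖gradient f (x k)‖ := fun k =>
    regularizedStep_mul_norm_gradient_le hμ.le hH.le (hlam k ▸ Real.sqrt_nonneg _) (hsc (x k))
      (by rw [hlam, Real.sq_sqrt (by positivity)]) (hstep k) (herr (x k) (x (k + 1)))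
  have hinv : ∀ k, k₀ ≤ k → ‖gradient f (x k)‖ ≤ μ ^ 2 / (4 * H) := by
    intro k hk
    induction k, hk using Nat.le_induction with
    | base => exact hk₀
    | succ n _ ih =>
      have hhalf : lam n ≤ μ / 2 := hlam n ▸ Real.sqrt_mul_le_half_of_le_div hμ.le hH ih
      have : μ * ‖gradient f (x (n + 1))‖ ≤ μ * ‖gradient f (x n)‖ := by
        nlinarith [hone n, norm_nonneg (gradient f (x n))]
      exact (le_of_mul_le_mul_left this hμ).trans ih
  intro k hk
  refine ⟨?_, hinv k hk⟩
  have hlam_nonneg : 0 ≤ lam k := hlam k ▸ Real.sqrt_nonneg _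
  calc ‖gradient f (x (k + 1))‖ ≤ lam k * ‖gradient f (x k)‖ / μ := by
        rw [le_div_iff₀' hμ]; exact hone k
    _ ≤ 2 * lam k * ‖gradient f (x k)‖ / μ := by gcongr; linarith
    _ = (2 * Real.sqrt H / μ) * ‖gradient f (x k)‖ ^ ((3 : ℝ) / 2) := by
        rw [hlam, Real.sqrt_mul hH.le, ← Real.sqrt_mul_self_eq_rpow (norm_nonneg _)]
        ring

/-- Local superlinear convergence. If `f` is μ-strongly convex with
H-bounded second-order error and `‖∇f(x^{k₀})‖ ≤ μ²/(4H)`, then for all `k ≥ k₀`,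
`‖∇f(x^{k+1})‖ ≤ (2√H/μ)‖∇f(x^k)‖^{3/2}` and `‖∇f(x^k)‖ ≤ μ²/(4H)`. -/
theorem stmt_11 {d : ℕ} (f : EuclideanSpace ℝ (Fin d) → ℝ)
    (hf : Differentiable ℝ f) (hf' : Differentiable ℝ (gradient f))
    (μ : ℝ) (hμ : 0 < μ)
    (hsc : ∀ x v : EuclideanSpace ℝ (Fin d),
      0 ≤ ⟪fderiv ℝ (gradient f) x v - μ • v, v⟫)
    (H : ℝ) (hH : 0 < H)
    (herr : ∀ x y : EuclideanSpace ℝ (Fin d),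
      ‖gradient f y - gradient f x - fderiv ℝ (gradient f) x (y - x)‖ ≤ H * ‖y - x‖ ^ 2)
    (x : ℕ → EuclideanSpace ℝ (Fin d))
    (lam : ℕ → ℝ)
    (hlam : ∀ k, lam k = Real.sqrt (H * ‖gradient f (x k)‖))
    (hstep : ∀ k, fderiv ℝ (gradient f) (x k) (x (k + 1) - x k)
      + lam k • (x (k + 1) - x k) = -gradient f (x k))
    (k₀ : ℕ) (hk₀ : ‖gradient f (x k₀)‖ ≤ μ ^ 2 / (4 * H)) :
    ∀ k : ℕ, k₀ ≤ k →
      ‖gradient f (x (k + 1))‖ ≤ (2 * Real.sqrt H / μ) * ‖gradient f (x k)‖ ^ ((3 : ℝ) / 2)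
        ∧ ‖gradient f (x k)‖ ≤ μ ^ 2 / (4 * H) :=
  stmt_11_general f μ hμ hsc H hH herr x lam hlam hstep k₀ hk₀
end

section
/- Let F : ℝ^d → ℝ^m be differentiable with Jacobian ∂F, let c > 0, and assume the cubic growth bound ‖F(y)‖² ≤ ‖F(x) + ∂F(x)(y − x)‖² + c‖y − x‖³ for all x, y ∈ ℝ^d. Suppose x, x⁺ ∈ ℝ^d satisfy (J^T J + λ·I)(x⁺ − x) = −J^T F(x) with J = ∂F(x) and λ = √(c‖J^T F(x)‖) > 0. Then ‖F(x⁺)‖² ≤ ‖F(x)‖² − λ‖x⁺ − x‖²; in particular ‖F(x⁺)‖ ≤ ‖F(x)‖. -/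
/-!
Write `s = x⁺ - x`, `J = ∂F(x)` and `g = Jᵀ F(x)`. Pairing the step equation with `s` gives
`‖J s‖² + λ‖s‖² = -⟪g, s⟫ ≤ ‖g‖ ‖s‖`, hence `λ‖s‖ ≤ ‖g‖` and, since `λ² = c‖g‖`, `c‖s‖ ≤ λ`.
The same identity shows that the linear model decreases by `‖J s‖² + 2λ‖s‖²`, so the cubic
error `c‖s‖³ ≤ λ‖s‖²` eats at most half of the regularisation gain.
-/

open ContinuousLinearMap

section LevenbergMarquardtStep

variable {E G : Type*} [NormedAddCommGroup E] [InnerProductSpace ℝ E] [CompleteSpace E]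
  [NormedAddCommGroup G] [InnerProductSpace ℝ G] [CompleteSpace G]
  {J : E →L[ℝ] G} {r : G} {s : E} {lam : ℝ}

theorem norm_apply_sq_add_mul_norm_sq_of_step (hstep : adjoint J (J s) + lam • s = -adjoint J r) :
    ‖J s‖ ^ 2 + lam * ‖s‖ ^ 2 = -inner ℝ (adjoint J r) s := by
  have h := congrArg (fun v => inner ℝ v s) hstep
  simp only [inner_add_left, inner_smul_left, inner_neg_left, RCLike.conj_to_real,
    adjoint_inner_left, real_inner_self_eq_norm_sq] at h
  rwa [adjoint_inner_left]

theorem norm_add_apply_sq_of_step (hstep : adjoint J (J s) + lam • s = -adjoint J r) :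
    ‖r + J s‖ ^ 2 = ‖r‖ ^ 2 - ‖J s‖ ^ 2 - 2 * lam * ‖s‖ ^ 2 := by
  have hpair := norm_apply_sq_add_mul_norm_sq_of_step hstep
  rw [adjoint_inner_left] at hpair
  rw [norm_add_sq_real]
  linarith

theorem mul_norm_le_norm_adjoint_of_step (hstep : adjoint J (J s) + lam • s = -adjoint J r) :
    lam * ‖s‖ ≤ ‖adjoint J r‖ := by
  rcases (norm_nonneg s).eq_or_lt with hs | hs
  · rw [← hs, mul_zero]
    exact norm_nonneg _
  · have hpair := norm_apply_sq_add_mul_norm_sq_of_step hstep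
    have hcs := neg_le_of_abs_le (abs_real_inner_le_norm (adjoint J r) s)
    refine le_of_mul_le_mul_right ?_ hs
    nlinarith [sq_nonneg ‖J s‖]

theorem mul_norm_le_of_step (hstep : adjoint J (J s) + lam • s = -adjoint J r) {c : ℝ}
    (hc : 0 ≤ c) (hlam : lam ^ 2 = c * ‖adjoint J r‖) (hlampos : 0 < lam) :
    c * ‖s‖ ≤ lam := by
  refine le_of_mul_le_mul_left ?_ hlampos
  calc lam * (c * ‖s‖) = c * (lam * ‖s‖) := by ring
    _ ≤ c * ‖adjoint J r‖ := mul_le_mul_of_nonneg_left (mul_norm_le_norm_adjoint_of_step hstep) hc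
    _ = lam * lam := by rw [← hlam, sq]

theorem norm_add_apply_sq_add_cubic_le_of_step
    (hstep : adjoint J (J s) + lam • s = -adjoint J r) {c : ℝ}
    (hc : 0 ≤ c) (hlam : lam ^ 2 = c * ‖adjoint J r‖) (hlampos : 0 < lam) :
    ‖r + J s‖ ^ 2 + c * ‖s‖ ^ 3 ≤ ‖r‖ ^ 2 - lam * ‖s‖ ^ 2 := by
  have hcubic : c * ‖s‖ ^ 3 ≤ lam * ‖s‖ ^ 2 := by
    have := mul_le_mul_of_nonneg_right (mul_norm_le_of_step hstep hc hlam hlampos)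
      (sq_nonneg ‖s‖)
    linarith
  rw [norm_add_apply_sq_of_step hstep]
  nlinarith [sq_nonneg ‖J s‖]

end LevenbergMarquardtStep

theorem stmt_16_general {d m : ℕ}
    (F : EuclideanSpace ℝ (Fin d) → EuclideanSpace ℝ (Fin m))
    (c : ℝ) (hc : 0 < c)
    (hcub : ∀ x y : EuclideanSpace ℝ (Fin d),
      ‖F y‖ ^ 2 ≤ ‖F x + (fderiv ℝ F x) (y - x)‖ ^ 2 + c * ‖y - x‖ ^ 3)
    (x xp : EuclideanSpace ℝ (Fin d)) (lam : ℝ)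
    (hlam : lam = Real.sqrt (c * ‖(ContinuousLinearMap.adjoint (fderiv ℝ F x)) (F x)‖))
    (hlampos : 0 < lam)
    (hstep : (ContinuousLinearMap.adjoint (fderiv ℝ F x)) ((fderiv ℝ F x) (xp - x))
        + lam • (xp - x)
      = -(ContinuousLinearMap.adjoint (fderiv ℝ F x)) (F x)) :
    ‖F xp‖ ^ 2 ≤ ‖F x‖ ^ 2 - lam * ‖xp - x‖ ^ 2 ∧ ‖F xp‖ ≤ ‖F x‖ := by
  have hlam_sq : lam ^ 2 = c * ‖adjoint (fderiv ℝ F x) (F x)‖ := by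
    rw [hlam, Real.sq_sqrt (mul_nonneg hc.le (norm_nonneg _))]
  have hdecrease : ‖F xp‖ ^ 2 ≤ ‖F x‖ ^ 2 - lam * ‖xp - x‖ ^ 2 :=
    (hcub x xp).trans (norm_add_apply_sq_add_cubic_le_of_step hstep hc.le hlam_sq hlampos)
  refine ⟨hdecrease, ?_⟩
  refine (pow_le_pow_iff_left₀ (norm_nonneg _) (norm_nonneg _) two_ne_zero).mp ?_
  nlinarith [sq_nonneg ‖xp - x‖]

/-- Under the cubic growth bound, the LM step with
`λ = √(c‖Jᵀ F(x)‖) > 0` satisfies `‖F(x⁺)‖² ≤ ‖F(x)‖² − λ‖x⁺ − x‖²`, and in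
particular `‖F(x⁺)‖ ≤ ‖F(x)‖`. -/
theorem stmt_16 {d m : ℕ}
    (F : EuclideanSpace ℝ (Fin d) → EuclideanSpace ℝ (Fin m))
    (hF : Differentiable ℝ F)
    (c : ℝ) (hc : 0 < c)
    (hcub : ∀ x y : EuclideanSpace ℝ (Fin d),
      ‖F y‖ ^ 2 ≤ ‖F x + (fderiv ℝ F x) (y - x)‖ ^ 2 + c * ‖y - x‖ ^ 3)
    (x xp : EuclideanSpace ℝ (Fin d)) (lam : ℝ)
    (hlam : lam = Real.sqrt (c * ‖(ContinuousLinearMap.adjoint (fderiv ℝ F x)) (F x)‖))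
    (hlampos : 0 < lam)
    (hstep : (ContinuousLinearMap.adjoint (fderiv ℝ F x)) ((fderiv ℝ F x) (xp - x))
        + lam • (xp - x)
      = -(ContinuousLinearMap.adjoint (fderiv ℝ F x)) (F x)) :
    ‖F xp‖ ^ 2 ≤ ‖F x‖ ^ 2 - lam * ‖xp - x‖ ^ 2 ∧ ‖F xp‖ ≤ ‖F x‖ :=
  stmt_16_general F c hc hcub x xp lam hlam hlampos hstep
end

section
/- Let F : ℝ^d → ℝ^m be differentiable with Jacobian ∂F, and assume for constants J, H, c > 0 that ‖∂F(x)‖ ≤ J (operator norm), ‖F(y) − F(x) − ∂F(x)(y − x)‖ ≤ H‖y − x‖², ‖∂F(y) − ∂F(x)‖ ≤ H‖y − x‖, and ‖F(y)‖² ≤ ‖F(x) + ∂F(x)(y − x)‖² + c‖y − x‖³, for all x, y ∈ ℝ^d. Let {x^k}_{k≥0} satisfy, for every k, (J_k^T J_k + λ_k·I)(x^{k+1} − x^k) = −J_k^T F(x^k), where J_k = ∂F(x^k) and λ_k = √(c‖J_k^T F(x^k)‖) > 0. Then the sequence ‖F(x^k)‖ is nonincreasing, and there exists a constant C > 0 such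 that for all k ≥ 2, min_{t ≤ k} ‖J_t^T F(x^t)‖ ≤ C·(log k)/k^{2/5}. -/
/-!
Write `g = Jᵀ F(x)` and `s` for the step. Testing the step equation against `s` gives
`‖J s‖² + λ‖s‖² = -⟪g, s⟫`, so the linear model decreases `‖F‖²` by at least `2λ‖s‖²`, and
Cauchy–Schwarz gives `λ‖s‖ ≤ ‖g‖`; with `λ² = c‖g‖` the cubic error `c‖s‖³` is then at most
`λ‖s‖²`. Hence `‖F(x^{k+1})‖² + λ_k ‖s_k‖² ≤ ‖F(x^k)‖²`. Since `‖g_k‖ ≤ (J² + λ_k)‖s_k‖` and the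
`λ_k` stay bounded, the numbers `λ_k ‖g_k‖² = √c ‖g_k‖^{5/2}` have telescoping, hence bounded,
partial sums; the least of the first `k + 1` of them is `O(1/k)`, so
`min_{t ≤ k} ‖g_t‖ = O(k^{-2/5})`, and the factor `log k ≥ log 2` only costs a constant.
-/

open ContinuousLinearMap
open scoped RealInnerProductSpace

theorem le_rpow_div_rpow_of_mul_sqrt_mul_mul_sq_le {y c n S : ℝ} (hy : 0 ≤ y) (hc : 0 < c)
    (hn : 0 < n) (h : n * (√(c * y) * y ^ 2) ≤ S) :
    y ≤ (S ^ 2 / c) ^ (5⁻¹ : ℝ) / n ^ (2 / 5 : ℝ) := by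
  have hn' : 0 < n ^ (2 / 5 : ℝ) := by positivity
  have hsq : n ^ 2 * c * y ^ 5 ≤ S ^ 2 := by
    have := pow_le_pow_left₀ (by positivity) h 2
    rw [mul_pow, mul_pow, Real.sq_sqrt (by positivity)] at this
    linarith
  rw [le_div_iff₀ hn', Real.le_rpow_inv_iff_of_pos (by positivity) (by positivity) (by norm_num),
    le_div_iff₀ hc, Real.mul_rpow hy hn'.le, ← Real.rpow_mul hn.le]
  norm_num
  linarith

theorem le_div_log_two_mul_log {a k : ℝ} (ha : 0 ≤ a) (hk : 2 ≤ k) :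
    a ≤ (a + 1) / Real.log 2 * Real.log k := by
  have hlog2 : 0 < Real.log 2 := Real.log_pos one_lt_two
  calc a ≤ a + 1 := by linarith
    _ = (a + 1) / Real.log 2 * Real.log 2 := (div_mul_cancel₀ _ hlog2.ne').symm
    _ ≤ (a + 1) / Real.log 2 * Real.log k := by gcongr

section LevenbergMarquardt

variable {E G : Type*} [NormedAddCommGroup E] [InnerProductSpace ℝ E] [CompleteSpace E]
  [NormedAddCommGroup G] [InnerProductSpace ℝ G] [CompleteSpace G]

def IsLevenbergMarquardtStep (A : E →L[ℝ] G) (f : G) (μ : ℝ) (s : E) : Prop :=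
  adjoint A (A s) + μ • s = -adjoint A f

namespace IsLevenbergMarquardtStep

variable {A : E →L[ℝ] G} {f : G} {μ : ℝ} {s : E}

theorem sq_norm_add_eq (hs : IsLevenbergMarquardtStep A f μ s) :
    ‖A s‖ ^ 2 + μ * ‖s‖ ^ 2 = -⟪adjoint A f, s⟫ := by
  have h := congrArg (⟪·, s⟫) hs
  simp only [inner_add_left, real_inner_smul_left, inner_neg_left, adjoint_inner_left,
    real_inner_self_eq_norm_sq] at h
  rw [adjoint_inner_left]
  linarith

theorem mul_norm_le (hs : IsLevenbergMarquardtStep A f μ s) :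
    μ * ‖s‖ ≤ ‖adjoint A f‖ := by
  rcases (norm_nonneg s).eq_or_lt with hs0 | hs0
  · rw [← hs0, mul_zero]
    exact norm_nonneg _
  have hCS : -⟪adjoint A f, s⟫ ≤ ‖adjoint A f‖ * ‖s‖ :=
    (neg_le_abs _).trans (abs_real_inner_le_norm _ _)
  have h := hs.sq_norm_add_eq
  nlinarith [sq_nonneg ‖A s‖]

theorem sq_norm_model_add (hs : IsLevenbergMarquardtStep A f μ s) :
    ‖f + A s‖ ^ 2 + ‖A s‖ ^ 2 + 2 * (μ * ‖s‖ ^ 2) = ‖f‖ ^ 2 := by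
  have h := hs.sq_norm_add_eq
  rw [adjoint_inner_left] at h
  rw [norm_add_sq_real]
  linarith

theorem mul_norm_cube_le {c : ℝ} (hs : IsLevenbergMarquardtStep A f μ s) (hc : 0 ≤ c)
    (hμ : 0 < μ) (hμc : μ ^ 2 = c * ‖adjoint A f‖) : c * ‖s‖ ^ 3 ≤ μ * ‖s‖ ^ 2 := by
  have h : μ * (c * ‖s‖ ^ 3) ≤ μ * (μ * ‖s‖ ^ 2) :=
    calc μ * (c * ‖s‖ ^ 3) = c * ‖s‖ ^ 2 * (μ * ‖s‖) := by ring
      _ ≤ c * ‖s‖ ^ 2 * ‖adjoint A f‖ := by gcongr; exact hs.mul_norm_le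
      _ = μ * (μ * ‖s‖ ^ 2) := by linear_combination ‖s‖ ^ 2 * hμc.symm
  exact le_of_mul_le_mul_left h hμ

theorem norm_adjoint_le (hs : IsLevenbergMarquardtStep A f μ s) (hμ : 0 ≤ μ) :
    ‖adjoint A f‖ ≤ (‖A‖ ^ 2 + μ) * ‖s‖ :=
  calc ‖adjoint A f‖ = ‖(adjoint A ∘L A) s + μ • s‖ := by rw [comp_apply, hs, norm_neg]
    _ ≤ ‖adjoint A ∘L A‖ * ‖s‖ + μ * ‖s‖ := by
      grw [norm_add_le, le_opNorm, norm_smul, Real.norm_of_nonneg hμ]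
    _ = (‖A‖ ^ 2 + μ) * ‖s‖ := by rw [norm_adjoint_comp_self]; ring

end IsLevenbergMarquardtStep

structure IsLevenbergMarquardtSeq (F : E → G) (D : E → E →L[ℝ] G) (c : ℝ) (x : ℕ → E)
    (μ : ℕ → ℝ) : Prop where
  damping_eq : ∀ k, μ k = √(c * ‖adjoint (D (x k)) (F (x k))‖)
  damping_pos : ∀ k, 0 < μ k
  step : ∀ k, IsLevenbergMarquardtStep (D (x k)) (F (x k)) (μ k) (x (k + 1) - x k)

namespace IsLevenbergMarquardtSeq

variable {F : E → G} {D : E → E →L[ℝ] G} {c J : ℝ} {x : ℕ → E} {μ : ℕ → ℝ}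

theorem sq_norm_succ_add_le (hx : IsLevenbergMarquardtSeq F D c x μ) (hc : 0 ≤ c)
    (hcub : ∀ y z, ‖F z‖ ^ 2 ≤ ‖F y + D y (z - y)‖ ^ 2 + c * ‖z - y‖ ^ 3) (k : ℕ) :
    ‖F (x (k + 1))‖ ^ 2 + μ k * ‖x (k + 1) - x k‖ ^ 2 ≤ ‖F (x k)‖ ^ 2 := by
  have hμc : μ k ^ 2 = c * ‖adjoint (D (x k)) (F (x k))‖ := by
    rw [hx.damping_eq, Real.sq_sqrt (by positivity)]
  have hmodel := (hx.step k).sq_norm_model_add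
  have hcube := (hx.step k).mul_norm_cube_le hc (hx.damping_pos k) hμc
  have := hcub (x k) (x (k + 1))
  nlinarith [sq_nonneg ‖D (x k) (x (k + 1) - x k)‖]

theorem norm_succ_le (hx : IsLevenbergMarquardtSeq F D c x μ) (hc : 0 ≤ c)
    (hcub : ∀ y z, ‖F z‖ ^ 2 ≤ ‖F y + D y (z - y)‖ ^ 2 + c * ‖z - y‖ ^ 3) (k : ℕ) :
    ‖F (x (k + 1))‖ ≤ ‖F (x k)‖ := by
  have := hx.sq_norm_succ_add_le hc hcub k
  have := mul_nonneg (hx.damping_pos k).le (sq_nonneg ‖x (k + 1) - x k‖)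
  exact (pow_le_pow_iff_left₀ (norm_nonneg _) (norm_nonneg _) two_ne_zero).mp (by linarith)

theorem damping_le (hx : IsLevenbergMarquardtSeq F D c x μ) (hc : 0 ≤ c)
    (hJ : ∀ y, ‖D y‖ ≤ J) (k : ℕ) : μ k ≤ √(c * (J * ‖F (x k)‖)) := by
  rw [hx.damping_eq]
  gcongr
  calc ‖adjoint (D (x k)) (F (x k))‖ ≤ ‖adjoint (D (x k))‖ * ‖F (x k)‖ := le_opNorm _ _
    _ ≤ J * ‖F (x k)‖ := by rw [LinearIsometryEquiv.norm_map]; gcongr; exact hJ _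

theorem mul_sq_norm_adjoint_le (hx : IsLevenbergMarquardtSeq F D c x μ) (hc : 0 ≤ c)
    (hcub : ∀ y z, ‖F z‖ ^ 2 ≤ ‖F y + D y (z - y)‖ ^ 2 + c * ‖z - y‖ ^ 3)
    (hJ : ∀ y, ‖D y‖ ≤ J) {Λ : ℝ} {k : ℕ} (hΛ : μ k ≤ Λ) :
    μ k * ‖adjoint (D (x k)) (F (x k))‖ ^ 2
      ≤ (J ^ 2 + Λ) ^ 2 * (‖F (x k)‖ ^ 2 - ‖F (x (k + 1))‖ ^ 2) := by
  have hμ := (hx.damping_pos k).le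
  have hg : ‖adjoint (D (x k)) (F (x k))‖ ≤ (J ^ 2 + Λ) * ‖x (k + 1) - x k‖ := by
    grw [(hx.step k).norm_adjoint_le hμ, hJ, hΛ]
  have hdec := hx.sq_norm_succ_add_le hc hcub k
  calc μ k * ‖adjoint (D (x k)) (F (x k))‖ ^ 2
      ≤ μ k * ((J ^ 2 + Λ) * ‖x (k + 1) - x k‖) ^ 2 := by gcongr
    _ = (J ^ 2 + Λ) ^ 2 * (μ k * ‖x (k + 1) - x k‖ ^ 2) := by ring
    _ ≤ (J ^ 2 + Λ) ^ 2 * (‖F (x k)‖ ^ 2 - ‖F (x (k + 1))‖ ^ 2) := by gcongr; linarith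

theorem sum_range_mul_sq_norm_adjoint_le (hx : IsLevenbergMarquardtSeq F D c x μ) (hc : 0 ≤ c)
    (hcub : ∀ y z, ‖F z‖ ^ 2 ≤ ‖F y + D y (z - y)‖ ^ 2 + c * ‖z - y‖ ^ 3)
    (hJ : ∀ y, ‖D y‖ ≤ J) (n : ℕ) :
    ∑ t ∈ Finset.range n, μ t * ‖adjoint (D (x t)) (F (x t))‖ ^ 2
      ≤ (J ^ 2 + √(c * (J * ‖F (x 0)‖))) ^ 2 * ‖F (x 0)‖ ^ 2 := by
  have hJ0 : 0 ≤ J := (norm_nonneg _).trans (hJ (x 0))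
  have hanti : Antitone fun k ↦ ‖F (x k)‖ := antitone_nat_of_succ_le (hx.norm_succ_le hc hcub)
  have hΛ (t : ℕ) : μ t ≤ √(c * (J * ‖F (x 0)‖)) :=
    (hx.damping_le hc hJ t).trans (by gcongr; exact hanti t.zero_le)
  calc ∑ t ∈ Finset.range n, μ t * ‖adjoint (D (x t)) (F (x t))‖ ^ 2
      ≤ ∑ t ∈ Finset.range n, (J ^ 2 + √(c * (J * ‖F (x 0)‖))) ^ 2
          * (‖F (x t)‖ ^ 2 - ‖F (x (t + 1))‖ ^ 2) :=
        Finset.sum_le_sum fun t _ ↦ hx.mul_sq_norm_adjoint_le hc hcub hJ (hΛ t)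
    _ = (J ^ 2 + √(c * (J * ‖F (x 0)‖))) ^ 2 * (‖F (x 0)‖ ^ 2 - ‖F (x n)‖ ^ 2) := by
      rw [← Finset.mul_sum, Finset.sum_range_sub' (fun t ↦ ‖F (x t)‖ ^ 2)]
    _ ≤ (J ^ 2 + √(c * (J * ‖F (x 0)‖))) ^ 2 * ‖F (x 0)‖ ^ 2 := by
      gcongr; linarith [sq_nonneg ‖F (x n)‖]

theorem exists_le_norm_adjoint_le (hx : IsLevenbergMarquardtSeq F D c x μ) (hc : 0 < c)
    (hcub : ∀ y z, ‖F z‖ ^ 2 ≤ ‖F y + D y (z - y)‖ ^ 2 + c * ‖z - y‖ ^ 3)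
    (hJ : ∀ y, ‖D y‖ ≤ J) {k : ℕ} (hk : 0 < k) :
    ∃ t ≤ k, ‖adjoint (D (x t)) (F (x t))‖
      ≤ (((J ^ 2 + √(c * (J * ‖F (x 0)‖))) ^ 2 * ‖F (x 0)‖ ^ 2) ^ 2 / c) ^ (5⁻¹ : ℝ)
        / (k : ℝ) ^ (2 / 5 : ℝ) := by
  set a : ℕ → ℝ := fun t ↦ μ t * ‖adjoint (D (x t)) (F (x t))‖ ^ 2
  obtain ⟨t, ht, hmin⟩ :=
    (Finset.range (k + 1)).exists_min_image a Finset.nonempty_range_add_one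
  refine ⟨t, Finset.mem_range_succ_iff.mp ht, ?_⟩
  apply le_rpow_div_rpow_of_mul_sqrt_mul_mul_sq_le (norm_nonneg _) hc (by exact_mod_cast hk)
  rw [← hx.damping_eq]
  have hsum := (Finset.range (k + 1)).card_nsmul_le_sum a (a t) hmin
  rw [Finset.card_range, nsmul_eq_mul] at hsum
  have hat : 0 ≤ a t := mul_nonneg (hx.damping_pos t).le (sq_nonneg _)
  calc (k : ℝ) * a t ≤ ((k + 1 : ℕ) : ℝ) * a t := by gcongr; omega
    _ ≤ _ := hsum.trans (hx.sum_range_mul_sq_norm_adjoint_le hc.le hcub hJ (k + 1))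

end IsLevenbergMarquardtSeq

end LevenbergMarquardt

theorem stmt_17_general {d m : ℕ}
    (F : EuclideanSpace ℝ (Fin d) → EuclideanSpace ℝ (Fin m))
    (J c : ℝ) (hc : 0 < c)
    (hJbound : ∀ x, ‖fderiv ℝ F x‖ ≤ J)
    (hcub : ∀ x y : EuclideanSpace ℝ (Fin d),
      ‖F y‖ ^ 2 ≤ ‖F x + (fderiv ℝ F x) (y - x)‖ ^ 2 + c * ‖y - x‖ ^ 3)
    (x : ℕ → EuclideanSpace ℝ (Fin d))
    (lam : ℕ → ℝ)
    (hlam : ∀ k, lam k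
      = Real.sqrt (c * ‖(ContinuousLinearMap.adjoint (fderiv ℝ F (x k))) (F (x k))‖))
    (hlampos : ∀ k, 0 < lam k)
    (hstep : ∀ k,
      (ContinuousLinearMap.adjoint (fderiv ℝ F (x k))) ((fderiv ℝ F (x k)) (x (k + 1) - x k))
        + lam k • (x (k + 1) - x k)
      = -(ContinuousLinearMap.adjoint (fderiv ℝ F (x k))) (F (x k))) :
    (∀ k : ℕ, ‖F (x (k + 1))‖ ≤ ‖F (x k)‖) ∧
      ∃ C : ℝ, 0 < C ∧ ∀ k : ℕ, 2 ≤ k →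
        ∃ t ≤ k, ‖(ContinuousLinearMap.adjoint (fderiv ℝ F (x t))) (F (x t))‖
          ≤ C * Real.log k / (k : ℝ) ^ ((2 : ℝ) / 5) := by
  have hx : IsLevenbergMarquardtSeq F (fderiv ℝ F) c x lam := ⟨hlam, hlampos, hstep⟩
  set K := (((J ^ 2 + √(c * (J * ‖F (x 0)‖))) ^ 2 * ‖F (x 0)‖ ^ 2) ^ 2 / c) ^ (5⁻¹ : ℝ)
  have hK : 0 ≤ K := by positivity
  refine ⟨hx.norm_succ_le hc.le hcub, (K + 1) / Real.log 2, by positivity, fun k hk ↦ ?_⟩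
  obtain ⟨t, htk, ht⟩ := hx.exists_le_norm_adjoint_le hc hcub hJbound (k := k) (by omega)
  refine ⟨t, htk, ht.trans ?_⟩
  gcongr
  exact le_div_log_two_mul_log hK (by exact_mod_cast hk)

/-- Global convergence of the Levenberg–Marquardt algorithm: the
residual norms `‖F(x^k)‖` are nonincreasing, and
`min_{t ≤ k} ‖J_tᵀ F(x^t)‖ ≤ C (log k)/k^{2/5}` for all `k ≥ 2` and some `C > 0`. -/
theorem stmt_17 {d m : ℕ}
    (F : EuclideanSpace ℝ (Fin d) → EuclideanSpace ℝ (Fin m))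
    (hF : Differentiable ℝ F)
    (J H c : ℝ) (hJ : 0 < J) (hH : 0 < H) (hc : 0 < c)
    (hJbound : ∀ x, ‖fderiv ℝ F x‖ ≤ J)
    (herr : ∀ x y : EuclideanSpace ℝ (Fin d),
      ‖F y - F x - (fderiv ℝ F x) (y - x)‖ ≤ H * ‖y - x‖ ^ 2)
    (hlip : ∀ x y : EuclideanSpace ℝ (Fin d),
      ‖fderiv ℝ F y - fderiv ℝ F x‖ ≤ H * ‖y - x‖)
    (hcub : ∀ x y : EuclideanSpace ℝ (Fin d),
      ‖F y‖ ^ 2 ≤ ‖F x + (fderiv ℝ F x) (y - x)‖ ^ 2 + c * ‖y - x‖ ^ 3)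
    (x : ℕ → EuclideanSpace ℝ (Fin d))
    (lam : ℕ → ℝ)
    (hlam : ∀ k, lam k
      = Real.sqrt (c * ‖(ContinuousLinearMap.adjoint (fderiv ℝ F (x k))) (F (x k))‖))
    (hlampos : ∀ k, 0 < lam k)
    (hstep : ∀ k,
      (ContinuousLinearMap.adjoint (fderiv ℝ F (x k))) ((fderiv ℝ F (x k)) (x (k + 1) - x k))
        + lam k • (x (k + 1) - x k)
      = -(ContinuousLinearMap.adjoint (fderiv ℝ F (x k))) (F (x k))) :
    (∀ k : ℕ, ‖F (x (k + 1))‖ ≤ ‖F (x k)‖) ∧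
      ∃ C : ℝ, 0 < C ∧ ∀ k : ℕ, 2 ≤ k →
        ∃ t ≤ k, ‖(ContinuousLinearMap.adjoint (fderiv ℝ F (x t))) (F (x t))‖
          ≤ C * Real.log k / (k : ℝ) ^ ((2 : ℝ) / 5) :=
  stmt_17_general F J c hc hJbound hcub x lam hlam hlampos hstep
end

section
/- Let F : ℝ^d → ℝ^m be differentiable with Jacobian ∂F, let c > 0, and assume the cubic growth bound ‖F(y)‖² ≤ ‖F(x) + ∂F(x)(y − x)‖² + c‖y − x‖³ for all x, y ∈ ℝ^d. Let {x^k}_{k≥0} satisfy, for every k, (J_k^T J_k + λ_k·I)(x^{k+1} − x^k) = −J_k^T F(x^k), where J_k = ∂F(x^k) and λ_k = √(c‖J_k^T F(x^k)‖) > 0. Then for every k ≥ 0, ‖F(x^{k+1})‖² ≤ ‖F(x⁰)‖² − Σ_{t=0}^{k} λ_t ‖x^{t+1} − x^t‖². -/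
/-!
With `r = F(xᵏ)`, `J = ∂F(xᵏ)` and `h = xᵏ⁺¹ - xᵏ`, pairing the step equation with `h` gives
`⟪r, J h⟫ = -(‖J h‖² + λ‖h‖²)`, hence `‖r + J h‖² = ‖r‖² - ‖J h‖² - 2λ‖h‖²`, and by Cauchy–Schwarz
`λ‖h‖ ≤ ‖Jᵀ r‖`. Since `λ² = c‖Jᵀ r‖`, the latter gives `c‖h‖ ≤ λ`, so the cubic error
`c‖h‖³` costs at most `λ‖h‖²` of the `2λ‖h‖²` decrease of the linear model. This yields the one-step
descent `‖F(xᵏ⁺¹)‖² ≤ ‖F(xᵏ)‖² - λₖ‖h‖²`, which telescopes.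
-/

open RealInnerProductSpace

theorem mul_le_sqrt_mul_of_sqrt_mul_mul_le {c a g : ℝ} (hg : 0 ≤ g) (hpos : 0 < √(c * g))
    (hle : √(c * g) * a ≤ g) : c * a ≤ √(c * g) := by
  have hc : 0 < c := pos_of_mul_pos_left (Real.sqrt_pos.mp hpos) hg
  refine le_of_mul_le_mul_right ?_ hpos
  calc c * a * √(c * g) = c * (√(c * g) * a) := by ring
    _ ≤ c * g := mul_le_mul_of_nonneg_left hle hc.le
    _ = √(c * g) * √(c * g) := (Real.mul_self_sqrt (Real.sqrt_pos.mp hpos).le).symm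

section LevenbergMarquardtStep

variable {E G : Type*} [NormedAddCommGroup E] [InnerProductSpace ℝ E] [CompleteSpace E]
  [NormedAddCommGroup G] [InnerProductSpace ℝ G] [CompleteSpace G]
  {J : E →L[ℝ] G} {r : G} {h : E} {lam : ℝ}

theorem inner_apply_eq_of_regularized_normal_eq
    (hstep : J.adjoint (J h) + lam • h = -J.adjoint r) :
    ⟪r, J h⟫ = -(‖J h‖ ^ 2 + lam * ‖h‖ ^ 2) := by
  rw [← ContinuousLinearMap.adjoint_inner_left, ← neg_neg (J.adjoint r), ← hstep, inner_neg_left,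
    inner_add_left, ContinuousLinearMap.adjoint_inner_left, real_inner_smul_left,
    real_inner_self_eq_norm_sq, real_inner_self_eq_norm_sq]

theorem norm_add_apply_sq_of_regularized_normal_eq
    (hstep : J.adjoint (J h) + lam • h = -J.adjoint r) :
    ‖r + J h‖ ^ 2 = ‖r‖ ^ 2 - ‖J h‖ ^ 2 - 2 * lam * ‖h‖ ^ 2 := by
  rw [norm_add_sq_real, inner_apply_eq_of_regularized_normal_eq hstep]
  ring

theorem mul_norm_le_norm_adjoint_of_regularized_normal_eq
    (hstep : J.adjoint (J h) + lam • h = -J.adjoint r) :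
    lam * ‖h‖ ≤ ‖J.adjoint r‖ := by
  rcases (norm_nonneg h).eq_or_lt with hh | hh
  · rw [← hh, mul_zero]
    exact norm_nonneg _
  have hpair : ‖J h‖ ^ 2 + lam * ‖h‖ ^ 2 ≤ ‖J.adjoint r‖ * ‖h‖ := by
    rw [← neg_neg (‖J h‖ ^ 2 + lam * ‖h‖ ^ 2), ← inner_apply_eq_of_regularized_normal_eq hstep,
      ← ContinuousLinearMap.adjoint_inner_left, ← inner_neg_left, ← norm_neg (J.adjoint r)]
    exact real_inner_le_norm _ _
  nlinarith [sq_nonneg ‖J h‖]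

theorem norm_sq_le_sub_of_levenbergMarquardt_step {r₁ : G} {c : ℝ}
    (hcub : ‖r₁‖ ^ 2 ≤ ‖r + J h‖ ^ 2 + c * ‖h‖ ^ 3)
    (hlam : lam = √(c * ‖J.adjoint r‖)) (hlampos : 0 < lam)
    (hstep : J.adjoint (J h) + lam • h = -J.adjoint r) :
    ‖r₁‖ ^ 2 ≤ ‖r‖ ^ 2 - lam * ‖h‖ ^ 2 := by
  have hlin := norm_add_apply_sq_of_regularized_normal_eq hstep
  have hch : c * ‖h‖ ≤ lam := by
    subst hlam
    exact mul_le_sqrt_mul_of_sqrt_mul_mul_le (norm_nonneg _) hlampos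
      (mul_norm_le_norm_adjoint_of_regularized_normal_eq hstep)
  have hcubic : c * ‖h‖ ^ 3 ≤ lam * ‖h‖ ^ 2 := by
    calc c * ‖h‖ ^ 3 = c * ‖h‖ * ‖h‖ ^ 2 := by ring
      _ ≤ lam * ‖h‖ ^ 2 := mul_le_mul_of_nonneg_right hch (sq_nonneg _)
  linarith [sq_nonneg ‖J h‖]

end LevenbergMarquardtStep

theorem le_sub_sum_range_of_le_sub {a b : ℕ → ℝ} (hab : ∀ k, a (k + 1) ≤ a k - b k) (n : ℕ) :
    a n ≤ a 0 - ∑ t ∈ Finset.range n, b t := by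
  have : ∑ t ∈ Finset.range n, b t ≤ ∑ t ∈ Finset.range n, (a t - a (t + 1)) :=
    Finset.sum_le_sum fun t _ => by linarith [hab t]
  rw [Finset.sum_range_sub'] at this
  linarith

theorem stmt_19_general {d m : ℕ}
    (F : EuclideanSpace ℝ (Fin d) → EuclideanSpace ℝ (Fin m))
    (c : ℝ)
    (hcub : ∀ x y : EuclideanSpace ℝ (Fin d),
      ‖F y‖ ^ 2 ≤ ‖F x + (fderiv ℝ F x) (y - x)‖ ^ 2 + c * ‖y - x‖ ^ 3)
    (x : ℕ → EuclideanSpace ℝ (Fin d))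
    (lam : ℕ → ℝ)
    (hlam : ∀ k, lam k
      = Real.sqrt (c * ‖(ContinuousLinearMap.adjoint (fderiv ℝ F (x k))) (F (x k))‖))
    (hlampos : ∀ k, 0 < lam k)
    (hstep : ∀ k,
      (ContinuousLinearMap.adjoint (fderiv ℝ F (x k))) ((fderiv ℝ F (x k)) (x (k + 1) - x k))
        + lam k • (x (k + 1) - x k)
      = -(ContinuousLinearMap.adjoint (fderiv ℝ F (x k))) (F (x k))) :
    ∀ k : ℕ, ‖F (x (k + 1))‖ ^ 2
      ≤ ‖F (x 0)‖ ^ 2 - ∑ t ∈ Finset.range (k + 1), lam t * ‖x (t + 1) - x t‖ ^ 2 := fun k =>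
  le_sub_sum_range_of_le_sub (a := fun k => ‖F (x k)‖ ^ 2)
    (fun k => norm_sq_le_sub_of_levenbergMarquardt_step (hcub (x k) (x (k + 1))) (hlam k)
      (hlampos k) (hstep k)) (k + 1)

/-- Telescoped LM descent: under the cubic growth bound,
`‖F(x^{k+1})‖² ≤ ‖F(x⁰)‖² − Σ_{t=0}^{k} λ_t ‖x^{t+1} − x^t‖²`. -/
theorem stmt_19 {d m : ℕ}
    (F : EuclideanSpace ℝ (Fin d) → EuclideanSpace ℝ (Fin m))
    (hF : Differentiable ℝ F)
    (c : ℝ) (hc : 0 < c)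
    (hcub : ∀ x y : EuclideanSpace ℝ (Fin d),
      ‖F y‖ ^ 2 ≤ ‖F x + (fderiv ℝ F x) (y - x)‖ ^ 2 + c * ‖y - x‖ ^ 3)
    (x : ℕ → EuclideanSpace ℝ (Fin d))
    (lam : ℕ → ℝ)
    (hlam : ∀ k, lam k
      = Real.sqrt (c * ‖(ContinuousLinearMap.adjoint (fderiv ℝ F (x k))) (F (x k))‖))
    (hlampos : ∀ k, 0 < lam k)
    (hstep : ∀ k,
      (ContinuousLinearMap.adjoint (fderiv ℝ F (x k))) ((fderiv ℝ F (x k)) (x (k + 1) - x k))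
        + lam k • (x (k + 1) - x k)
      = -(ContinuousLinearMap.adjoint (fderiv ℝ F (x k))) (F (x k))) :
    ∀ k : ℕ, ‖F (x (k + 1))‖ ^ 2
      ≤ ‖F (x 0)‖ ^ 2 - ∑ t ∈ Finset.range (k + 1), lam t * ‖x (t + 1) - x t‖ ^ 2 :=
  stmt_19_general F c hcub x lam hlam hlampos hstep
end
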